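/- If U is an n×n bistochastic matrix that is an extreme point of the set of bistochastic matrices, then every entry of U is 0 or 1 (i.e., U is a permutation matrix). -/

import Mathlib

def Bistochastic {n : ℕ} (U : Matrix (Fin n) (Fin n) ℝ) : Prop :=
  (∀ i j, 0 ≤ U i j) ∧ (∀ i, ∑ j, U i j = 1) ∧ (∀ j, ∑ i, U i j = 1)

/-! By Birkhoff's theorem (`extremePoints_doublyStochastic` in Mathlib) the extreme points of the
doubly stochastic matrices are the permutation matrices. The only gap is that extremality is
given here through midpoints rather than open segments: if `x = a • x₁ + b • x₂` with `a, b > 0`,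
moving the weights by `t = min a b` in both directions yields two points of the convex set with
midpoint `x`, and they coincide only if `x₁ = x₂`. -/

theorem Convex.mem_extremePoints_of_forall_midpoint {𝕜 E : Type*} [Field 𝕜] [LinearOrder 𝕜]
    [IsStrictOrderedRing 𝕜] [AddCommGroup E] [Module 𝕜 E] {A : Set E} (hA : Convex 𝕜 A)
    {x : E} (hx : x ∈ A) (h : ∀ y ∈ A, ∀ z ∈ A, x = (2⁻¹ : 𝕜) • (y + z) → y = z) :
    x ∈ A.extremePoints 𝕜 := by
  refine ⟨hx, fun x₁ hx₁ x₂ hx₂ ⟨a, b, ha, hb, hab, hx_eq⟩ => ?_⟩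
  set t := min a b
  have ht : 0 < t := lt_min ha hb
  have hta : t ≤ a := min_le_left a b
  have htb : t ≤ b := min_le_right a b
  have hV : (a + t) • x₁ + (b - t) • x₂ ∈ A := hA hx₁ hx₂ (by linarith) (by linarith) (by linarith)
  have hW : (a - t) • x₁ + (b + t) • x₂ ∈ A := hA hx₁ hx₂ (by linarith) (by linarith) (by linarith)
  have hVW := h _ hV _ hW (by rw [← hx_eq]; module)
  have hdiff : (2 * t) • (x₁ - x₂) = 0 := by
    rw [← sub_eq_zero] at hVW
    linear_combination (norm := module) hVW
  obtain rfl : x₁ = x₂ :=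
    sub_eq_zero.1 ((smul_eq_zero.1 hdiff).resolve_left (by positivity))
  rw [← hx_eq, Convex.combo_self hab]

theorem bistochastic_iff_mem_doublyStochastic {n : ℕ} (U : Matrix (Fin n) (Fin n) ℝ) :
    Bistochastic U ↔ U ∈ doublyStochastic ℝ (Fin n) :=
  mem_doublyStochastic_iff_sum.symm

theorem Equiv.Perm.permMatrix_apply_eq_zero_or_eq_one {R n : Type*} [DecidableEq n] [Zero R]
    [One R] (σ : Equiv.Perm n) (i j : n) :
    σ.permMatrix R i j = 0 ∨ σ.permMatrix R i j = 1 := by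
  rw [Equiv.Perm.permMatrix, PEquiv.toMatrix_apply]
  split_ifs <;> simp

theorem stmt_2 (n : ℕ) (U : Matrix (Fin n) (Fin n) ℝ) (hU : Bistochastic U)
    (hext : ∀ V W : Matrix (Fin n) (Fin n) ℝ,
      Bistochastic V → Bistochastic W → U = (2⁻¹ : ℝ) • (V + W) → V = W) :
    ∀ i j, U i j = 0 ∨ U i j = 1 := by
  have hU_extreme : U ∈ (doublyStochastic ℝ (Fin n) : Set _).extremePoints ℝ :=
    convex_doublyStochastic.mem_extremePoints_of_forall_midpoint
      ((bistochastic_iff_mem_doublyStochastic U).1 hU) fun V hV W hW hmid =>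
        hext V W ((bistochastic_iff_mem_doublyStochastic V).2 hV)
          ((bistochastic_iff_mem_doublyStochastic W).2 hW) hmid
  rw [extremePoints_doublyStochastic] at hU_extreme
  obtain ⟨σ, rfl⟩ := hU_extreme
  exact σ.permMatrix_apply_eq_zero_or_eq_one
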